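/- Let m ≥ 1 be an integer and let 0 < d⋆ < c⋆ ≤ b⋆ < a⋆. Set B⋆ = −2(1+m) a⋆^{1+m/2}/(2+m) and D⋆ = (2(1+m) c⋆^{1+m/2}/(2+m))·(1 + (c⋆/b⋆)^{m/2}) + B⋆·(c⋆/b⋆)^{1+m}. Define f : [0,∞) → ℝ by f(t) = −m/(2+m) + D⋆ t^{−1−m/2} for t ∈ (d⋆, c⋆], f(t) = m/(2+m) + B⋆ t^{−1−m/2} for t ∈ (b⋆, a⋆], and f(t) = 0 otherwise. Then Λ_m^* f(t) = −1 for every t ∈ (d⋆, c⋆) and Λ_m^* f(t) = 1 for every t ∈ (b⋆, a⋆). -/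
import Mathlib


open MeasureTheory Real Set

/-- The adjoint operator `Λ_m^*`. -/
noncomputable def LamStar (m : ℕ) (f : ℝ → ℝ) (t : ℝ) : ℝ :=
  (1 + (m : ℝ)) * t ^ ((m : ℝ) / 2) * (∫ s in Set.Ioi t, f s * s ^ (-1 - (m : ℝ) / 2)) - f t

lemma combo_integrableOn (M A C x y : ℝ) (hx : 0 < x) (hxy : x ≤ y) :
    IntegrableOn (fun s : ℝ => A * s ^ (-1 - M / 2) + C * s ^ (-2 - M)) (Set.Ioc x y) := by
  have h0 : (0 : ℝ) ∉ Set.uIcc x y := by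
    rw [Set.uIcc_of_le hxy]
    intro h
    exact absurd h.1 (not_le.mpr hx)
  have i1 : IntervalIntegrable (fun s : ℝ => s ^ (-1 - M / 2)) volume x y :=
    intervalIntegral.intervalIntegrable_rpow (Or.inr h0)
  have i2 : IntervalIntegrable (fun s : ℝ => s ^ (-2 - M)) volume x y :=
    intervalIntegral.intervalIntegrable_rpow (Or.inr h0)
  have := (i1.const_mul A).add (i2.const_mul C)
  exact (intervalIntegrable_iff_integrableOn_Ioc_of_le hxy).mp this

lemma combo_integral (M : ℝ) (hM : 1 ≤ M) (A C x y : ℝ) (hx : 0 < x) (hxy : x ≤ y) :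
    ∫ s in Set.Ioc x y, (A * s ^ (-1 - M / 2) + C * s ^ (-2 - M)) =
      A * (2 / M) * (x ^ (-(M / 2)) - y ^ (-(M / 2)))
        + C * (1 / (1 + M)) * (x ^ (-1 - M) - y ^ (-1 - M)) := by
  have hM0 : M ≠ 0 := by linarith
  have h1M : (1 : ℝ) + M ≠ 0 := by linarith
  have h0 : (0 : ℝ) ∉ Set.uIcc x y := by
    rw [Set.uIcc_of_le hxy]
    intro h
    exact absurd h.1 (not_le.mpr hx)
  have i1 : IntervalIntegrable (fun s : ℝ => s ^ (-1 - M / 2)) volume x y :=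
    intervalIntegral.intervalIntegrable_rpow (Or.inr h0)
  have i2 : IntervalIntegrable (fun s : ℝ => s ^ (-2 - M)) volume x y :=
    intervalIntegral.intervalIntegrable_rpow (Or.inr h0)
  rw [← intervalIntegral.integral_of_le hxy,
    intervalIntegral.integral_add (i1.const_mul A) (i2.const_mul C),
    intervalIntegral.integral_const_mul, intervalIntegral.integral_const_mul,
    integral_rpow (Or.inr ⟨by intro h; linarith [hM], h0⟩),
    integral_rpow (Or.inr ⟨by intro h; linarith [hM], h0⟩)]
  have e1 : (-1 - M / 2 + 1 : ℝ) = -(M / 2) := by ring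
  have e2 : (-2 - M + 1 : ℝ) = -1 - M := by ring
  rw [e1, e2]
  have h1M' : (-1 : ℝ) - M ≠ 0 := by linarith
  have hhalf : -(M / 2) ≠ 0 := by simp [hM0]
  have k1 : (y ^ (-(M / 2)) - x ^ (-(M / 2))) / -(M / 2)
      = 2 / M * (x ^ (-(M / 2)) - y ^ (-(M / 2))) := by
    rw [div_eq_iff hhalf]
    field_simp
    ring
  have k2 : (y ^ (-1 - M) - x ^ (-1 - M)) / (-1 - M)
      = 1 / (1 + M) * (x ^ (-1 - M) - y ^ (-1 - M)) := by
    rw [div_eq_iff h1M']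
    field_simp
    ring
  rw [k1, k2]
  ring

lemma tail_integral (g : ℝ → ℝ) (x y : ℝ) (hxy : x ≤ y)
    (h0 : ∀ s ∈ Set.Ioi y, g s = 0) (hi : IntegrableOn g (Set.Ioc x y)) :
    ∫ s in Set.Ioi x, g s = ∫ s in Set.Ioc x y, g s := by
  have hdisj : Disjoint (Set.Ioc x y) (Set.Ioi y) := by
    rw [Set.disjoint_left]
    intro s hs hs'
    exact absurd hs' (not_lt.mpr hs.2)
  have hu : Set.Ioc x y ∪ Set.Ioi y = Set.Ioi x := Set.Ioc_union_Ioi_eq_Ioi hxy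
  have hzero : ∫ s in Set.Ioi y, g s = 0 := by
    rw [setIntegral_congr_fun measurableSet_Ioi h0, integral_zero]
  have hi2 : IntegrableOn g (Set.Ioi y) :=
    (integrableOn_zero (μ := volume) (s := Set.Ioi y)).congr_fun
      (fun s hs => (h0 s hs).symm) measurableSet_Ioi
  rw [← hu, setIntegral_union hdisj measurableSet_Ioi hi hi2, hzero, add_zero]

set_option maxHeartbeats 2000000 in
/-- For the piecewise-defined function `f` built from `0 < d⋆ < c⋆ ≤ b⋆ < a⋆` and the
coefficients `B⋆`, `D⋆`, we have `Λ_m^* f = -1` on `(d⋆,c⋆)` and `Λ_m^* f = 1` on `(b⋆,a⋆)`. -/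
theorem stmt_3 (m : ℕ) (hm : 1 ≤ m) (aS bS cS dS : ℝ)
    (hd : 0 < dS) (hdc : dS < cS) (hcb : cS ≤ bS) (hba : bS < aS)
    (BS DS : ℝ)
    (hB : BS = -(2 * (1 + (m : ℝ)) * aS ^ (1 + (m : ℝ) / 2)) / (2 + (m : ℝ)))
    (hD : DS = (2 * (1 + (m : ℝ)) * cS ^ (1 + (m : ℝ) / 2) / (2 + (m : ℝ)))
        * (1 + (cS / bS) ^ ((m : ℝ) / 2))
        + BS * (cS / bS) ^ (1 + (m : ℝ)))
    (f : ℝ → ℝ)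
    (hf : f = fun t =>
      if dS < t ∧ t ≤ cS then -(m : ℝ) / (2 + (m : ℝ)) + DS * t ^ (-1 - (m : ℝ) / 2)
      else if bS < t ∧ t ≤ aS then (m : ℝ) / (2 + (m : ℝ)) + BS * t ^ (-1 - (m : ℝ) / 2)
      else 0) :
    (∀ t ∈ Set.Ioo dS cS, LamStar m f t = -1) ∧ (∀ t ∈ Set.Ioo bS aS, LamStar m f t = 1) := by
  set M : ℝ := (m : ℝ) with hMdef
  have hM1 : (1 : ℝ) ≤ M := Nat.one_le_cast.mpr hm
  have hM0 : M ≠ 0 := by linarith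
  have h1M : (1 : ℝ) + M ≠ 0 := by linarith
  have h2M : (2 : ℝ) + M ≠ 0 := by linarith
  have hc : 0 < cS := lt_trans hd hdc
  have hb : 0 < bS := lt_of_lt_of_le hc hcb
  have ha : 0 < aS := lt_trans hb hba
  set g : ℝ → ℝ := fun s => f s * s ^ (-1 - M / 2) with hgdef
  -- pointwise descriptions of g on the pieces
  have hpow : ∀ s : ℝ, 0 < s → s ^ (-1 - M / 2) * s ^ (-1 - M / 2) = s ^ (-2 - M) := by
    intro s hs
    rw [← Real.rpow_add hs]
    congr 1
    ring
  have hEq3 : ∀ s ∈ Set.Ioc bS aS,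
      g s = M / (2 + M) * s ^ (-1 - M / 2) + BS * s ^ (-2 - M) := by
    intro s hs
    have hs0 : 0 < s := lt_trans hb hs.1
    simp only [hgdef, hf]
    rw [if_neg (by rintro ⟨h1, h2⟩; linarith [hs.1]), if_pos ⟨hs.1, hs.2⟩]
    linear_combination BS * hpow s hs0
  have hEq1 : ∀ s ∈ Set.Ioc dS cS,
      g s = -M / (2 + M) * s ^ (-1 - M / 2) + DS * s ^ (-2 - M) := by
    intro s hs
    have hs0 : 0 < s := lt_trans hd hs.1
    simp only [hgdef, hf]
    rw [if_pos ⟨hs.1, hs.2⟩]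
    linear_combination DS * hpow s hs0
  have hEq2 : ∀ s ∈ Set.Ioc cS bS, g s = 0 := by
    intro s hs
    simp only [hgdef, hf]
    rw [if_neg (by rintro ⟨h1, h2⟩; linarith [hs.1]),
      if_neg (by rintro ⟨h1, h2⟩; linarith [hs.2]), zero_mul]
  have hEq4 : ∀ s ∈ Set.Ioi aS, g s = 0 := by
    intro s hs
    have hs' : aS < s := hs
    simp only [hgdef, hf]
    rw [if_neg (by rintro ⟨h1, h2⟩; linarith), if_neg (by rintro ⟨h1, h2⟩; linarith), zero_mul]
  -- the integral over `Ioc bS aS`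
  have hI3 : ∫ s in Set.Ioc bS aS, g s =
      M / (2 + M) * (2 / M) * (bS ^ (-(M / 2)) - aS ^ (-(M / 2)))
        + BS * (1 / (1 + M)) * (bS ^ (-1 - M) - aS ^ (-1 - M)) := by
    rw [setIntegral_congr_fun measurableSet_Ioc hEq3]
    exact combo_integral M hM1 _ _ _ _ hb hba.le
  -- rpow rewriting facts
  have hneg : ∀ x : ℝ, 0 < x → x ^ (-(M / 2)) = (x ^ (M / 2))⁻¹ := by
    intro x hx; rw [Real.rpow_neg hx.le]
  have hm1 : ∀ x : ℝ, 0 < x → x ^ (-1 - M) = (x * (x ^ (M / 2) * x ^ (M / 2)))⁻¹ := by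
    intro x hx
    rw [show (-1 - M : ℝ) = -(1 + M / 2 + M / 2) by ring, Real.rpow_neg hx.le,
      Real.rpow_add hx, Real.rpow_add hx, Real.rpow_one, mul_assoc]
  have hm2 : ∀ x : ℝ, 0 < x → x ^ (-1 - M / 2) = (x * x ^ (M / 2))⁻¹ := by
    intro x hx
    rw [show (-1 - M / 2 : ℝ) = -(1 + M / 2) by ring, Real.rpow_neg hx.le,
      Real.rpow_add hx, Real.rpow_one]
  have hm3 : ∀ x : ℝ, 0 < x → x ^ (1 + M / 2) = x * x ^ (M / 2) := by
    intro x hx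
    rw [Real.rpow_add hx, Real.rpow_one]
  have hdivpow : (cS / bS) ^ (M / 2) = cS ^ (M / 2) / bS ^ (M / 2) :=
    Real.div_rpow hc.le (by positivity) _
  have hdivpow2 : (cS / bS) ^ (1 + M) =
      (cS * (cS ^ (M / 2) * cS ^ (M / 2))) / (bS * (bS ^ (M / 2) * bS ^ (M / 2))) := by
    rw [Real.div_rpow hc.le (by positivity),
      show ((1 : ℝ) + M) = 1 + M / 2 + M / 2 by ring,
      Real.rpow_add hc, Real.rpow_add hc, Real.rpow_one,
      Real.rpow_add hb, Real.rpow_add hb, Real.rpow_one, mul_assoc, mul_assoc]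
  have hTa : (0 : ℝ) < aS ^ (M / 2) := Real.rpow_pos_of_pos ha _
  have hTb : (0 : ℝ) < bS ^ (M / 2) := Real.rpow_pos_of_pos hb _
  have hTc : (0 : ℝ) < cS ^ (M / 2) := Real.rpow_pos_of_pos hc _
  constructor
  · -- t ∈ (dS, cS)
    intro t ht
    have ht0 : 0 < t := lt_trans hd ht.1
    have hTt : (0 : ℝ) < t ^ (M / 2) := Real.rpow_pos_of_pos ht0 _
    have hIcb : ∫ s in Set.Ioc cS bS, g s = 0 := by
      rw [setIntegral_congr_fun measurableSet_Ioc hEq2, integral_zero]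
    have hI1 : ∫ s in Set.Ioc t cS, g s =
        -M / (2 + M) * (2 / M) * (t ^ (-(M / 2)) - cS ^ (-(M / 2)))
          + DS * (1 / (1 + M)) * (t ^ (-1 - M) - cS ^ (-1 - M)) := by
      rw [setIntegral_congr_fun measurableSet_Ioc
        (fun s hs => hEq1 s ⟨lt_trans ht.1 hs.1, hs.2⟩)]
      exact combo_integral M hM1 _ _ _ _ ht0 ht.2.le
    have hitc : IntegrableOn g (Set.Ioc t cS) :=
      (combo_integrableOn M (-M / (2 + M)) DS t cS ht0 ht.2.le).congr_fun
        (fun s hs => (hEq1 s ⟨lt_trans ht.1 hs.1, hs.2⟩).symm) measurableSet_Ioc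
    have hicb : IntegrableOn g (Set.Ioc cS bS) :=
      (integrableOn_zero (μ := volume) (s := Set.Ioc cS bS)).congr_fun
        (fun s hs => (hEq2 s hs).symm) measurableSet_Ioc
    have hiba : IntegrableOn g (Set.Ioc bS aS) :=
      (combo_integrableOn M (M / (2 + M)) BS bS aS hb hba.le).congr_fun
        (fun s hs => (hEq3 s hs).symm) measurableSet_Ioc
    have hdisj1 : Disjoint (Set.Ioc cS bS) (Set.Ioc bS aS) := by
      rw [Set.disjoint_left]; intro s hs hs'; exact absurd hs'.1 (not_lt.mpr hs.2)
    have hdisj2 : Disjoint (Set.Ioc t cS) (Set.Ioc cS aS) := by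
      rw [Set.disjoint_left]; intro s hs hs'; exact absurd hs'.1 (not_lt.mpr hs.2)
    have hsplit : ∫ s in Set.Ioi t, g s =
        (∫ s in Set.Ioc t cS, g s) + (∫ s in Set.Ioc cS bS, g s) + ∫ s in Set.Ioc bS aS, g s := by
      have hu1 : Set.Ioc cS bS ∪ Set.Ioc bS aS = Set.Ioc cS aS :=
        Set.Ioc_union_Ioc_eq_Ioc hcb hba.le
      have hu2 : Set.Ioc t cS ∪ Set.Ioc cS aS = Set.Ioc t aS :=
        Set.Ioc_union_Ioc_eq_Ioc ht.2.le (le_trans hcb hba.le)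
      have hica : IntegrableOn g (Set.Ioc cS aS) := by
        rw [← hu1]; exact hicb.union hiba
      rw [tail_integral g t aS (by linarith [ht.2]) hEq4 (by rw [← hu2]; exact hitc.union hica),
        ← hu2, setIntegral_union hdisj2 measurableSet_Ioc hitc hica, ← hu1,
        setIntegral_union hdisj1 measurableSet_Ioc hicb hiba, add_assoc]
    have hft : f t = -M / (2 + M) + DS * t ^ (-1 - M / 2) := by
      simp only [hf]
      rw [if_pos ⟨ht.1, ht.2.le⟩]
    rw [LamStar]
    have : (∫ s in Set.Ioi t, f s * s ^ (-1 - (m : ℝ) / 2)) =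
        (∫ s in Set.Ioi t, g s) := rfl
    rw [this, hsplit, hI1, hIcb, hI3, hft, hD, hB]
    rw [hneg t ht0, hneg cS hc, hneg bS hb, hneg aS ha, hm1 t ht0, hm1 cS hc, hm1 bS hb,
      hm1 aS ha, hm2 t ht0, hm3 cS hc, hm3 aS ha, hdivpow, hdivpow2]
    field_simp
    ring
  · -- t ∈ (bS, aS)
    intro t ht
    have ht0 : 0 < t := lt_trans hb ht.1
    have hTt : (0 : ℝ) < t ^ (M / 2) := Real.rpow_pos_of_pos ht0 _
    have hI3' : ∫ s in Set.Ioc t aS, g s =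
        M / (2 + M) * (2 / M) * (t ^ (-(M / 2)) - aS ^ (-(M / 2)))
          + BS * (1 / (1 + M)) * (t ^ (-1 - M) - aS ^ (-1 - M)) := by
      rw [setIntegral_congr_fun measurableSet_Ioc
        (fun s hs => hEq3 s ⟨lt_trans ht.1 hs.1, hs.2⟩)]
      exact combo_integral M hM1 _ _ _ _ ht0 ht.2.le
    have hita : IntegrableOn g (Set.Ioc t aS) :=
      (combo_integrableOn M (M / (2 + M)) BS t aS ht0 ht.2.le).congr_fun
        (fun s hs => (hEq3 s ⟨lt_trans ht.1 hs.1, hs.2⟩).symm) measurableSet_Ioc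
    have hft : f t = M / (2 + M) + BS * t ^ (-1 - M / 2) := by
      simp only [hf]
      rw [if_neg (by rintro ⟨h1, h2⟩; linarith [ht.1]), if_pos ⟨ht.1, ht.2.le⟩]
    rw [LamStar]
    have : (∫ s in Set.Ioi t, f s * s ^ (-1 - (m : ℝ) / 2)) =
        (∫ s in Set.Ioi t, g s) := rfl
    rw [this, tail_integral g t aS ht.2.le hEq4 hita, hI3', hft, hB]
    rw [hneg t ht0, hneg aS ha, hm1 t ht0, hm1 aS ha, hm2 t ht0, hm3 aS ha]
    field_simp
    ring
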